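/- The dual of the extended SDP with linear constraints is strictly feasible: there exists a dual vector y = (y_0, (y_{ij}), (y_j)) with y_{ij} < 0 for all i, j, y_j < 0 for all j ∈ {1,…,p}, and Q − 𝒜ᵀy positive definite. -/

import Mathlib

noncomputable def A0mat (n : ℕ) : Matrix (Fin (n + 1)) (Fin (n + 1)) ℝ :=
  fun k m => if k = 0 ∧ m = 0 then 1 else 0

noncomputable def Aconstr (n : ℕ) (l u : Fin n → ℤ) (β : Fin n → ℤ → ℝ)
    (i : Fin n) (j : ℤ) : Matrix (Fin (n + 1)) (Fin (n + 1)) ℝ :=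
  fun k m =>
    if k = 0 then
      if m = 0 then
        (if j = u i then β i j + (l i : ℝ) * (u i : ℝ)
         else β i j - (j : ℝ) * ((j : ℝ) + 1))
      else if m = i.succ then
        (if j = u i then -((l i : ℝ) + (u i : ℝ)) / 2 else (j : ℝ) + 1 / 2)
      else 0
    else if k = i.succ then
      if m = 0 then
        (if j = u i then -((l i : ℝ) + (u i : ℝ)) / 2 else (j : ℝ) + 1 / 2)
      else if m = i.succ then (if j = u i then (1 : ℝ) else -1)
      else 0
    else 0

noncomputable def ATy (n : ℕ) (l u : Fin n → ℤ) (β : Fin n → ℤ → ℝ)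
    (y0 : ℝ) (yv : Fin n → ℤ → ℝ) : Matrix (Fin (n + 1)) (Fin (n + 1)) ℝ :=
  y0 • A0mat n + ∑ i : Fin n, ∑ j ∈ Finset.Icc (l i) (u i), yv i j • Aconstr n l u β i j

noncomputable def bdot (n : ℕ) (l u : Fin n → ℤ) (β : Fin n → ℤ → ℝ)
    (y0 : ℝ) (yv : Fin n → ℤ → ℝ) : ℝ :=
  y0 + ∑ i : Fin n, ∑ j ∈ Finset.Icc (l i) (u i), β i j * yv i j

noncomputable def Alin (n p : ℕ) (a : Fin p → Fin n → ℝ) (bb : Fin p → ℝ)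
    (βlin : Fin p → ℝ) (j : Fin p) : Matrix (Fin (n + 1)) (Fin (n + 1)) ℝ :=
  fun k m =>
    if hk : k = 0 then
      (if hm : m = 0 then βlin j - bb j else a j (m.pred hm) / 2)
    else if hm : m = 0 then a j (k.pred hk) / 2
    else 0

noncomputable def ATyExt (n : ℕ) (l u : Fin n → ℤ) (β : Fin n → ℤ → ℝ)
    (p : ℕ) (a : Fin p → Fin n → ℝ) (bb : Fin p → ℝ) (βlin : Fin p → ℝ)
    (y0 : ℝ) (yv : Fin n → ℤ → ℝ) (yl : Fin p → ℝ) :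
    Matrix (Fin (n + 1)) (Fin (n + 1)) ℝ :=
  ATy n l u β y0 yv + ∑ j : Fin p, yl j • Alin n p a bb βlin j

noncomputable def bdotExt (n : ℕ) (l u : Fin n → ℤ) (β : Fin n → ℤ → ℝ)
    (p : ℕ) (βlin : Fin p → ℝ)
    (y0 : ℝ) (yv : Fin n → ℤ → ℝ) (yl : Fin p → ℝ) : ℝ :=
  bdot n l u β y0 yv + ∑ j : Fin p, βlin j * yl j

open Matrix Finset

/-! ### Auxiliary lemmas -/

lemma mySum_mulVec {ι N : Type*} [Fintype N] [DecidableEq N] (s : Finset ι)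
    (f : ι → Matrix N N ℝ) (x : N → ℝ) :
    (∑ i ∈ s, f i) *ᵥ x = ∑ i ∈ s, f i *ᵥ x := by
  ext k
  simp only [Matrix.mulVec, dotProduct, Matrix.sum_apply, Finset.sum_apply, Finset.sum_mul]
  exact Finset.sum_comm

lemma myDot_sum {ι N : Type*} [Fintype N] (s : Finset ι) (v : ι → N → ℝ) (x : N → ℝ) :
    x ⬝ᵥ (∑ i ∈ s, v i) = ∑ i ∈ s, x ⬝ᵥ v i := by
  simp only [dotProduct, Finset.sum_apply, Finset.mul_sum]
  exact Finset.sum_comm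

lemma qf_A0 (n : ℕ) (x : Fin (n+1) → ℝ) : x ⬝ᵥ (A0mat n *ᵥ x) = x 0 ^ 2 := by
  simp only [dotProduct, Matrix.mulVec, A0mat]
  rw [Fin.sum_univ_succ]
  simp [dotProduct, Fin.succ_ne_zero, sq, Finset.mul_sum]

lemma qf_Aconstr (n : ℕ) (l u : Fin n → ℤ) (β : Fin n → ℤ → ℝ) (i : Fin n) (j : ℤ)
    (x : Fin (n+1) → ℝ) :
    x ⬝ᵥ (Aconstr n l u β i j *ᵥ x) =
      (if j = u i then β i j + (l i : ℝ) * (u i : ℝ) else β i j - (j:ℝ)*((j:ℝ)+1)) * x 0 ^ 2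
      + 2 * (if j = u i then -((l i:ℝ)+(u i:ℝ))/2 else (j:ℝ)+1/2) * x 0 * x i.succ
      + (if j = u i then (1:ℝ) else -1) * x i.succ ^ 2 := by
  by_cases hj : j = u i <;>
  · simp only [dotProduct, Matrix.mulVec, Aconstr, hj, Fin.sum_univ_succ, Fin.succ_ne_zero,
      Fin.succ_inj, if_false, if_true, eq_self_iff_true, ite_mul, zero_mul, mul_ite, mul_zero,
      Finset.sum_ite_eq', Finset.mem_univ, Finset.sum_ite_irrel, Finset.sum_const_zero]
    ring

lemma qf_Alin (n p : ℕ) (a : Fin p → Fin n → ℝ) (bb : Fin p → ℝ) (βlin : Fin p → ℝ)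
    (j : Fin p) (x : Fin (n+1) → ℝ) :
    x ⬝ᵥ (Alin n p a bb βlin j *ᵥ x) =
      (βlin j - bb j) * x 0 ^ 2 + x 0 * ∑ k : Fin n, a j k * x k.succ := by
  simp only [dotProduct, Matrix.mulVec, Alin, Fin.sum_univ_succ, Fin.pred_succ,
    Fin.succ_ne_zero, dite_true, dite_false, dif_pos, dif_neg, not_false_iff,
    mul_zero, zero_mul, add_zero, Finset.sum_const_zero, eq_self_iff_true]
  rw [Finset.mul_sum, mul_add, Finset.mul_sum, add_assoc, ← Finset.sum_add_distrib]
  refine congrArg₂ (· + ·) (by ring) (Finset.sum_congr rfl fun k _ => by ring)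

lemma herm_A0 (n : ℕ) : (A0mat n).IsHermitian := by
  refine Matrix.ext fun k m => ?_
  simp [Matrix.conjTranspose_apply, A0mat, and_comm]

lemma herm_Aconstr (n : ℕ) (l u : Fin n → ℤ) (β : Fin n → ℤ → ℝ) (i : Fin n) (j : ℤ) :
    (Aconstr n l u β i j).IsHermitian := by
  refine Matrix.ext fun k m => ?_
  simp only [Matrix.conjTranspose_apply, star_trivial, Aconstr]
  by_cases hk : k = 0 <;> by_cases hm : m = 0 <;>
    by_cases hk2 : k = i.succ <;> by_cases hm2 : m = i.succ <;>
    simp [hk, hm, hk2, hm2, Fin.succ_ne_zero] at * <;> simp_all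

lemma herm_Alin (n p : ℕ) (a : Fin p → Fin n → ℝ) (bb : Fin p → ℝ) (βlin : Fin p → ℝ)
    (j : Fin p) : (Alin n p a bb βlin j).IsHermitian := by
  refine Matrix.ext fun k m => ?_
  simp only [Matrix.conjTranspose_apply, star_trivial, Alin]
  by_cases hk : k = 0 <;> by_cases hm : m = 0 <;> simp [hk, hm]

lemma herm_sum {ι N : Type*} [Fintype N] [DecidableEq N] (s : Finset ι)
    (f : ι → Matrix N N ℝ) (h : ∀ i ∈ s, (f i).IsHermitian) :
    (∑ i ∈ s, f i).IsHermitian := by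
  unfold Matrix.IsHermitian at *
  rw [Matrix.conjTranspose_sum]
  exact Finset.sum_congr rfl h

lemma herm_smul {N : Type*} [Fintype N] [DecidableEq N] (c : ℝ) {M : Matrix N N ℝ}
    (h : M.IsHermitian) : (c • M).IsHermitian := by
  unfold Matrix.IsHermitian at *
  rw [Matrix.conjTranspose_smul, h]
  simp

theorem stmt14 (n : ℕ) (hn : 1 ≤ n) (l u : Fin n → ℤ) (hlu : ∀ i, l i < u i)
    (β : Fin n → ℤ → ℝ) (Q : Matrix (Fin (n + 1)) (Fin (n + 1)) ℝ)
    (hQ : Q.IsHermitian) (p : ℕ) (hp : 1 ≤ p)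
    (a : Fin p → Fin n → ℝ) (bb : Fin p → ℝ) (βlin : Fin p → ℝ) :
    ∃ (y0 : ℝ) (yv : Fin n → ℤ → ℝ) (yl : Fin p → ℝ),
      (∀ i : Fin n, ∀ j ∈ Finset.Icc (l i) (u i), yv i j < 0) ∧
      (∀ j : Fin p, yl j < 0) ∧
      (Q - ATyExt n l u β p a bb βlin y0 yv yl).PosDef := by
  classical
  set C : ℝ := ∑ k : Fin (n+1), ∑ m : Fin (n+1), |Q k m| with hCdef
  have hC0 : 0 ≤ C :=
    Finset.sum_nonneg fun _ _ => Finset.sum_nonneg fun _ _ => abs_nonneg _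
  have hcardsum : (0:ℝ) ≤ ∑ i : Fin n, ((Finset.Icc (l i) (u i)).card : ℝ) :=
    Finset.sum_nonneg fun i _ => Nat.cast_nonneg _
  set t : ℝ := C + 2 + ∑ i : Fin n, ((Finset.Icc (l i) (u i)).card : ℝ) with htdef
  have ht2 : 2 ≤ t := by rw [htdef]; linarith
  set w : Fin n → ℤ → ℝ := fun i j => if j = u i then t else 1 with hw
  have hwpos : ∀ i j, 0 < w i j := by
    intro i j
    by_cases h : j = u i <;> simp [hw, h] <;> linarith
  set αf : Fin n → ℤ → ℝ := fun i j =>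
    if j = u i then β i j + (l i : ℝ) * (u i : ℝ) else β i j - (j:ℝ)*((j:ℝ)+1) with hαf
  set γf : Fin n → ℤ → ℝ := fun i j =>
    if j = u i then -((l i:ℝ)+(u i:ℝ))/2 else (j:ℝ)+1/2 with hγf
  set G : Fin n → ℝ := fun i => ∑ j ∈ Finset.Icc (l i) (u i), w i j * γf i j with hG
  set P : Fin n → ℝ := fun i => ∑ j ∈ Finset.Icc (l i) (u i), w i j * αf i j with hP
  set cc : Fin n → ℝ := fun i => G i + (∑ q : Fin p, a q i)/2 with hcc
  set s : ℝ := C + 1 + (∑ k : Fin n, (cc k)^2) - (∑ i : Fin n, P i)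
      - (∑ q : Fin p, (βlin q - bb q)) with hs
  refine ⟨-s, fun i j => -(w i j), fun _ => -1,
    fun i j _ => by simpa using hwpos i j, fun j => by norm_num, ?_⟩
  -- membership of u i in the interval
  have hmemu : ∀ i : Fin n, u i ∈ Finset.Icc (l i) (u i) := fun i =>
    Finset.mem_Icc.mpr ⟨le_of_lt (hlu i), le_refl _⟩
  -- δ-sum computation
  have hD : ∀ i : Fin n,
      (∑ j ∈ Finset.Icc (l i) (u i), w i j * (if j = u i then (1:ℝ) else -1))
        = t + 1 - ((Finset.Icc (l i) (u i)).card : ℝ) := by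
    intro i
    have : ∀ j ∈ Finset.Icc (l i) (u i),
        w i j * (if j = u i then (1:ℝ) else -1)
          = -1 + (if j = u i then t + 1 else 0) := by
      intro j _
      by_cases h : j = u i <;> simp [hw, h] <;> ring
    rw [Finset.sum_congr rfl this, Finset.sum_add_distrib, Finset.sum_const,
      Finset.sum_ite_eq' _ (u i) (fun _ => t + 1), if_pos (hmemu i)]
    push_cast
    ring
  have hDge : ∀ i : Fin n, C + 2 ≤ t + 1 - ((Finset.Icc (l i) (u i)).card : ℝ) := by
    intro i
    have h1 : ((Finset.Icc (l i) (u i)).card : ℝ)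
        ≤ ∑ k : Fin n, ((Finset.Icc (l k) (u k)).card : ℝ) :=
      Finset.single_le_sum (f := fun k : Fin n => ((Finset.Icc (l k) (u k)).card : ℝ))
        (fun k _ => Nat.cast_nonneg _) (Finset.mem_univ i)
    rw [htdef] at *
    linarith
  -- Hermitian-ness
  have hermATE : (ATyExt n l u β p a bb βlin (-s) (fun i j => -(w i j)) fun _ => -1).IsHermitian := by
    refine Matrix.IsHermitian.add (Matrix.IsHermitian.add ?_ ?_) ?_
    · exact herm_smul _ (herm_A0 n)
    · exact herm_sum _ _ fun i _ => herm_sum _ _ fun j _ => herm_smul _ (herm_Aconstr n l u β i j)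
    · exact herm_sum _ _ fun q _ => herm_smul _ (herm_Alin n p a bb βlin q)
  refine Matrix.PosDef.of_dotProduct_mulVec_pos (hQ.sub hermATE) fun x hx => ?_
  have hstar : star x = x := by
    funext k; simp
  rw [hstar]
  -- quadratic form expansion
  have hqf : x ⬝ᵥ ((Q - ATyExt n l u β p a bb βlin (-s) (fun i j => -(w i j)) fun _ => -1) *ᵥ x)
      = x ⬝ᵥ (Q *ᵥ x) + s * x 0 ^ 2
        + ∑ i : Fin n, ∑ j ∈ Finset.Icc (l i) (u i), w i j *
            (αf i j * x 0 ^ 2 + 2 * γf i j * x 0 * x i.succ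
              + (if j = u i then (1:ℝ) else -1) * x i.succ ^ 2)
        + ∑ q : Fin p, ((βlin q - bb q) * x 0 ^ 2 + x 0 * ∑ k : Fin n, a q k * x k.succ) := by
    rw [Matrix.sub_mulVec, dotProduct_sub]
    unfold ATyExt ATy
    rw [Matrix.add_mulVec, Matrix.add_mulVec, dotProduct_add, dotProduct_add,
      Matrix.smul_mulVec, dotProduct_smul, mySum_mulVec, myDot_sum,
      mySum_mulVec, myDot_sum, qf_A0]
    have e1 : ∀ i : Fin n, x ⬝ᵥ ((∑ j ∈ Finset.Icc (l i) (u i),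
        (-(w i j)) • Aconstr n l u β i j) *ᵥ x)
        = -∑ j ∈ Finset.Icc (l i) (u i), w i j *
            (αf i j * x 0 ^ 2 + 2 * γf i j * x 0 * x i.succ
              + (if j = u i then (1:ℝ) else -1) * x i.succ ^ 2) := by
      intro i
      rw [mySum_mulVec, myDot_sum, ← Finset.sum_neg_distrib]
      refine Finset.sum_congr rfl fun j _ => ?_
      rw [Matrix.smul_mulVec, dotProduct_smul, qf_Aconstr]
      simp only [hαf, hγf, smul_eq_mul]
      ring
    have e2 : ∀ q : Fin p, x ⬝ᵥ (((-1 : ℝ) • Alin n p a bb βlin q) *ᵥ x)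
        = -(((βlin q - bb q) * x 0 ^ 2 + x 0 * ∑ k : Fin n, a q k * x k.succ)) := by
      intro q
      rw [Matrix.smul_mulVec, dotProduct_smul, qf_Alin]
      simp
    rw [Finset.sum_congr rfl fun i _ => e1 i, Finset.sum_congr rfl fun q _ => e2 q,
      Finset.sum_neg_distrib, Finset.sum_neg_distrib]
    simp only [smul_eq_mul]
    ring
  rw [hqf]
  set Sx : ℝ := ∑ b : Fin (n+1), x b ^ 2 with hSxdef
  have hSx : Sx = x 0 ^ 2 + ∑ k : Fin n, x k.succ ^ 2 := by
    rw [hSxdef]; exact Fin.sum_univ_succ _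
  have hsq : ∀ b : Fin (n+1), x b ^ 2 ≤ Sx := fun b =>
    Finset.single_le_sum (f := fun c : Fin (n+1) => x c ^ 2)
      (fun _ _ => sq_nonneg _) (Finset.mem_univ b)
  have hSxpos : 0 < Sx := by
    obtain ⟨b, hb⟩ := Function.ne_iff.mp hx
    have : 0 < x b ^ 2 := lt_of_le_of_ne (sq_nonneg _) (Ne.symm (pow_ne_zero 2 hb))
    exact lt_of_lt_of_le this (hsq b)
  -- lower bound on the Q part
  have hQb : -C * Sx ≤ x ⬝ᵥ (Q *ᵥ x) := by
    have expand : x ⬝ᵥ (Q *ᵥ x) = ∑ k : Fin (n+1), ∑ m : Fin (n+1), x k * (Q k m * x m) := by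
      simp [dotProduct, Matrix.mulVec, Finset.mul_sum]
    have per : ∀ k m : Fin (n+1), -(|Q k m| * Sx) ≤ x k * (Q k m * x m) := by
      intro k m
      have h1 : x k ^ 2 ≤ Sx := hsq k
      have h2 : x m ^ 2 ≤ Sx := hsq m
      have habs : |x k * (Q k m * x m)| = |Q k m| * (|x k| * |x m|) := by
        rw [abs_mul, abs_mul]; ring
      have h3 : |x k| * |x m| ≤ Sx := by
        nlinarith [sq_nonneg (|x k| - |x m|), sq_abs (x k), sq_abs (x m)]
      have h4 : |x k * (Q k m * x m)| ≤ |Q k m| * Sx := by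
        rw [habs]
        exact mul_le_mul_of_nonneg_left h3 (abs_nonneg _)
      linarith [neg_abs_le (x k * (Q k m * x m))]
    have : ∑ k : Fin (n+1), ∑ m : Fin (n+1), -(|Q k m| * Sx)
        ≤ ∑ k : Fin (n+1), ∑ m : Fin (n+1), x k * (Q k m * x m) :=
      Finset.sum_le_sum fun k _ => Finset.sum_le_sum fun m _ => per k m
    have heq : ∑ k : Fin (n+1), ∑ m : Fin (n+1), -(|Q k m| * Sx) = -C * Sx := by
      rw [hCdef]
      simp [Finset.sum_mul, Finset.sum_neg_distrib]
    rw [expand]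
    linarith [heq ▸ this]
  -- rewrite the middle double sum
  have hmid : ∀ i : Fin n,
      (∑ j ∈ Finset.Icc (l i) (u i), w i j *
        (αf i j * x 0 ^ 2 + 2 * γf i j * x 0 * x i.succ
          + (if j = u i then (1:ℝ) else -1) * x i.succ ^ 2))
      = P i * x 0 ^ 2 + 2 * G i * x 0 * x i.succ
        + (t + 1 - ((Finset.Icc (l i) (u i)).card : ℝ)) * x i.succ ^ 2 := by
    intro i
    have h1 : ∀ j ∈ Finset.Icc (l i) (u i),
        w i j * (αf i j * x 0 ^ 2 + 2 * γf i j * x 0 * x i.succ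
          + (if j = u i then (1:ℝ) else -1) * x i.succ ^ 2)
        = w i j * αf i j * x 0 ^ 2 + w i j * γf i j * (2 * x 0 * x i.succ)
          + w i j * (if j = u i then (1:ℝ) else -1) * x i.succ ^ 2 := fun j _ => by ring
    rw [Finset.sum_congr rfl h1, Finset.sum_add_distrib, Finset.sum_add_distrib,
      ← Finset.sum_mul, ← Finset.sum_mul, ← Finset.sum_mul]
    have h2 : ∑ j ∈ Finset.Icc (l i) (u i), w i j * (if j = u i then (1:ℝ) else -1)
        = t + 1 - ((Finset.Icc (l i) (u i)).card : ℝ) := hD i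
    rw [h2]
    have h3 : ∑ j ∈ Finset.Icc (l i) (u i), w i j * αf i j = P i := by rw [hP]
    have h4 : ∑ j ∈ Finset.Icc (l i) (u i), w i j * γf i j = G i := by rw [hG]
    rw [h3, h4]
    ring
  rw [Finset.sum_congr rfl fun i (_ : i ∈ Finset.univ) => hmid i]
  -- rewrite the linear-constraint sum
  have hlin : ∑ q : Fin p, ((βlin q - bb q) * x 0 ^ 2 + x 0 * ∑ k : Fin n, a q k * x k.succ)
      = (∑ q : Fin p, (βlin q - bb q)) * x 0 ^ 2
        + ∑ k : Fin n, (∑ q : Fin p, a q k) * (x 0 * x k.succ) := by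
    rw [Finset.sum_add_distrib, ← Finset.sum_mul]
    congr 1
    rw [← Finset.mul_sum, Finset.sum_comm, Finset.mul_sum]
    refine Finset.sum_congr rfl fun k _ => ?_
    rw [Finset.mul_sum, Finset.sum_mul]
    exact Finset.sum_congr rfl fun q _ => by ring
  rw [hlin]
  -- combine the two Fin n sums
  have hcomb : ∑ i : Fin n, (P i * x 0 ^ 2 + 2 * G i * x 0 * x i.succ
        + (t + 1 - ((Finset.Icc (l i) (u i)).card : ℝ)) * x i.succ ^ 2)
      = (∑ i : Fin n, P i) * x 0 ^ 2
        + ∑ k : Fin n, (2 * G k * x 0 * x k.succ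
            + (t + 1 - ((Finset.Icc (l k) (u k)).card : ℝ)) * x k.succ ^ 2) := by
    rw [Finset.sum_add_distrib, Finset.sum_add_distrib, ← Finset.sum_mul,
      Finset.sum_add_distrib, add_assoc]
  rw [hcomb]
  -- per-coordinate lower bound
  have hkey : ∀ k : Fin n,
      -(cc k ^ 2) * x 0 ^ 2 + (C + 1) * x k.succ ^ 2
        ≤ 2 * G k * x 0 * x k.succ + (∑ q : Fin p, a q k) * (x 0 * x k.succ)
          + (t + 1 - ((Finset.Icc (l k) (u k)).card : ℝ)) * x k.succ ^ 2 := by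
    intro k
    have hD2 := hDge k
    have hcck : cc k = G k + (∑ q : Fin p, a q k) / 2 := by rw [hcc]
    have hsub : 2 * G k * x 0 * x k.succ + (∑ q : Fin p, a q k) * (x 0 * x k.succ)
        = 2 * cc k * x 0 * x k.succ := by rw [hcck]; ring
    rw [hsub]
    nlinarith [sq_nonneg (cc k * x 0 + x k.succ), sq_nonneg (x k.succ)]
  have hsumkey : ∑ k : Fin n, (-(cc k ^ 2) * x 0 ^ 2 + (C + 1) * x k.succ ^ 2)
      ≤ ∑ k : Fin n, (2 * G k * x 0 * x k.succ + (∑ q : Fin p, a q k) * (x 0 * x k.succ)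
          + (t + 1 - ((Finset.Icc (l k) (u k)).card : ℝ)) * x k.succ ^ 2) :=
    Finset.sum_le_sum fun k _ => hkey k
  have hsplitkey : ∑ k : Fin n, (-(cc k ^ 2) * x 0 ^ 2 + (C + 1) * x k.succ ^ 2)
      = -((∑ k : Fin n, cc k ^ 2) * x 0 ^ 2) + (C + 1) * ∑ k : Fin n, x k.succ ^ 2 := by
    rw [Finset.sum_add_distrib, ← Finset.sum_mul, Finset.mul_sum]
    simp [Finset.sum_neg_distrib, Finset.sum_mul]
  have hS2 : s * x 0 ^ 2 + (∑ i : Fin n, P i) * x 0 ^ 2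
      + (∑ q : Fin p, (βlin q - bb q)) * x 0 ^ 2
      = (C + 1) * x 0 ^ 2 + (∑ k : Fin n, cc k ^ 2) * x 0 ^ 2 := by
    rw [hs]; ring
  -- assemble
  have hmerge : ∑ k : Fin n, (2 * G k * x 0 * x k.succ
        + (t + 1 - ((Finset.Icc (l k) (u k)).card : ℝ)) * x k.succ ^ 2)
      + ∑ k : Fin n, (∑ q : Fin p, a q k) * (x 0 * x k.succ)
      = ∑ k : Fin n, (2 * G k * x 0 * x k.succ + (∑ q : Fin p, a q k) * (x 0 * x k.succ)
          + (t + 1 - ((Finset.Icc (l k) (u k)).card : ℝ)) * x k.succ ^ 2) := by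
    rw [← Finset.sum_add_distrib]
    exact Finset.sum_congr rfl fun k _ => by ring
  have hQb2 : -C * (x 0 ^ 2 + ∑ k : Fin n, x k.succ ^ 2) ≤ x ⬝ᵥ (Q *ᵥ x) := by
    rw [← hSx]; exact hQb
  linarith [hsumkey, hsplitkey, hQb2, hSx, hSxpos, hS2, hmerge]
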